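/- Let S = Sg⟨X|R⟩ be a semigroup given by an Adian presentation (a positive presentation whose left graph and right graph are both cycle-free). Then S contains no idempotent element; that is, there is no w ∈ X⁺ with w = w² in S. -/

import Mathlib

/-- The first letter of a nonempty positive word. -/
def firstLetter {X : Type*} (u : FreeSemigroup X) : X := u.head

/-- The last letter of a nonempty positive word. -/
def lastLetter {X : Type*} (u : FreeSemigroup X) : X :=
  (u.head :: u.tail).getLast (List.cons_ne_nil _ _)

/-- The start vertex of an oriented edge of the (left or right) graph of a positive
presentation. -/
def edgeStart {X : Type*} (side : FreeSemigroup X → X)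
    (s : (FreeSemigroup X × FreeSemigroup X) × Bool) : X :=
  if s.2 then side s.1.1 else side s.1.2

/-- The end vertex of an oriented edge. -/
def edgeEnd {X : Type*} (side : FreeSemigroup X → X)
    (s : (FreeSemigroup X × FreeSemigroup X) × Bool) : X :=
  if s.2 then side s.1.2 else side s.1.1

/-- A cycle in the undirected graph on vertex set `X` whose edges are the relations of
`R`, the endpoints of the edge of a relation `(u,v)` being `side u` and `side v`. -/
def HasCycle {X : Type*} (R : Set (FreeSemigroup X × FreeSemigroup X))
    (side : FreeSemigroup X → X) : Prop :=
  ∃ es : List ((FreeSemigroup X × FreeSemigroup X) × Bool),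
    es ≠ [] ∧ (∀ s ∈ es, s.1 ∈ R) ∧
    es.Chain' (fun s t => edgeEnd side s = edgeStart side t) ∧
    (∀ hne : es ≠ [], edgeEnd side (es.getLast hne) = edgeStart side (es.head hne)) ∧
    (es.map Prod.fst).Nodup

/-!
A cycle-free left graph makes `Sg⟨X|R⟩` left cancellative. In a derivation `x s ⟶* x t`, the
steps that rewrite the first letter trace a closed walk at `x` in the left graph. A nonempty
closed walk in a forest backtracks along some edge `e, e⁻¹`; between these two steps the word
keeps the prefix `e.rev.src`, which cancels by induction on the length of the derivation, and
then both steps can be dropped. Without first-letter steps, `x` cancels outright. Cancelling `w`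
from `w = w²` leaves a derivation from the empty word to `w`, which is impossible.
-/

namespace Adian

variable {X : Type*}

theorem exists_eq_append_cons_append_cons_of_not_nodup_map {α β : Type*} {f : α → β}
    {l : List α} (h : ¬ (l.map f).Nodup) :
    ∃ A s B t C, l = A ++ s :: B ++ t :: C ∧ f s = f t := by
  rw [List.Nodup, List.pairwise_map, List.pairwise_iff_forall_sublist] at h
  push Not at h
  obtain ⟨s, t, hst, hf⟩ := h
  obtain ⟨r₁, r₂, rfl, hs, ht⟩ := List.cons_sublist_iff.1 hst
  obtain ⟨A, B, rfl⟩ := List.append_of_mem hs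
  obtain ⟨B', C, rfl⟩ := List.append_of_mem (List.singleton_sublist.1 ht)
  exact ⟨A, s, B ++ B', t, C, by simp, hf⟩

def letters (u : FreeSemigroup X) : List X := u.head :: u.tail

theorem letters_ne_nil (u : FreeSemigroup X) : letters u ≠ [] := List.cons_ne_nil _ _

theorem letters_mul (u v : FreeSemigroup X) : letters (u * v) = letters u ++ letters v := rfl

/-- A relation `(u, v)` together with a direction: `true` reads it from `u` to `v`. -/
abbrev Edge (X : Type*) := (FreeSemigroup X × FreeSemigroup X) × Bool

namespace Edge

def rev (e : Edge X) : Edge X := (e.1, !e.2)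

def src (e : Edge X) : List X := letters (if e.2 then e.1.1 else e.1.2)

@[simp] theorem rev_rev (e : Edge X) : e.rev.rev = e := by simp [rev]

theorem src_ne_nil (e : Edge X) : e.src ≠ [] := letters_ne_nil _

theorem head_src (e : Edge X) : e.src.head e.src_ne_nil = edgeStart firstLetter e := by
  unfold src edgeStart; split <;> rfl

theorem edgeStart_rev (side : FreeSemigroup X → X) (e : Edge X) :
    edgeStart side e.rev = edgeEnd side e := by
  unfold rev edgeStart edgeEnd; cases e.2 <;> rfl

end Edge

variable (R : Set (FreeSemigroup X × FreeSemigroup X)) (side : FreeSemigroup X → X)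

def IsWalk : X → List (Edge X) → X → Prop
  | x, [], y => x = y
  | x, e :: es, y => e.1 ∈ R ∧ edgeStart side e = x ∧ IsWalk (edgeEnd side e) es y

variable {R side}

@[simp] theorem isWalk_nil {x y : X} : IsWalk R side x [] y ↔ x = y := Iff.rfl

@[simp] theorem isWalk_cons {x y : X} {e : Edge X} {es : List (Edge X)} :
    IsWalk R side x (e :: es) y ↔
      e.1 ∈ R ∧ edgeStart side e = x ∧ IsWalk R side (edgeEnd side e) es y := Iff.rfl

theorem isWalk_append {x z : X} {es₁ es₂ : List (Edge X)} :
    IsWalk R side x (es₁ ++ es₂) z ↔ ∃ y, IsWalk R side x es₁ y ∧ IsWalk R side y es₂ z := by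
  induction es₁ generalizing x with
  | nil => simp
  | cons e es₁ ih => simp [ih, and_assoc]

theorem IsWalk.fst_mem {x y : X} {es : List (Edge X)} (h : IsWalk R side x es y) :
    ∀ e ∈ es, e.1 ∈ R := by
  induction es generalizing x with
  | nil => simp
  | cons e es ih => simpa [h.1] using ih h.2.2

theorem IsWalk.isChain {x y : X} {es : List (Edge X)} (h : IsWalk R side x es y) :
    es.IsChain (fun e f => edgeEnd side e = edgeStart side f) := by
  induction es generalizing x with
  | nil => exact .nil
  | cons e es ih =>
    cases es with
    | nil => exact .singleton e
    | cons f es => exact .cons_cons h.2.2.2.1.symm (ih h.2.2)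

theorem IsWalk.edgeStart_head {x y : X} {es : List (Edge X)} (h : IsWalk R side x es y)
    (hne : es ≠ []) : edgeStart side (es.head hne) = x := by
  cases es with
  | nil => exact absurd rfl hne
  | cons e es => exact h.2.1

theorem IsWalk.edgeEnd_getLast {x y : X} {es : List (Edge X)} (h : IsWalk R side x es y)
    (hne : es ≠ []) : edgeEnd side (es.getLast hne) = y := by
  induction es generalizing x with
  | nil => exact absurd rfl hne
  | cons e es ih =>
    cases es with
    | nil => exact h.2.2
    | cons f es => exact ih h.2.2 (List.cons_ne_nil _ _)

theorem IsWalk.hasCycle {x : X} {es : List (Edge X)} (h : IsWalk R side x es x) (hne : es ≠ [])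
    (hnd : (es.map Prod.fst).Nodup) : HasCycle R side :=
  ⟨es, hne, h.fst_mem, h.isChain,
    fun hne => (h.edgeEnd_getLast hne).trans (h.edgeStart_head hne).symm, hnd⟩

theorem IsWalk.exists_backtrack (hR : ¬ HasCycle R side) {x : X} {es : List (Edge X)}
    (h : IsWalk R side x es x) (hne : es ≠ []) :
    ∃ es₁ e es₂, es = es₁ ++ e :: Edge.rev e :: es₂ := by
  induction hlen : es.length using Nat.strong_induction_on generalizing x es with
  | _ n ih =>
  by_cases hnd : (es.map Prod.fst).Nodup
  · exact (hR (h.hasCycle hne hnd)).elim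
  obtain ⟨A, (s : Edge X), B, (t : Edge X), C, rfl, hst⟩ :=
    exists_eq_append_cons_append_cons_of_not_nodup_map hnd
  obtain ⟨z, hAsB, htC⟩ := isWalk_append.1 h
  obtain ⟨y, -, hsB⟩ := isWalk_append.1 hAsB
  obtain ⟨-, hs, hB⟩ := isWalk_cons.1 hsB
  obtain ⟨-, ht, -⟩ := isWalk_cons.1 htC
  have hlen' : (s :: B).length < n := by subst hlen; simp; omega
  by_cases hdir : s.2 = t.2
  · obtain rfl : s = t := Prod.ext hst hdir
    subst hs ht
    obtain ⟨P, e, Q, hPQ⟩ := ih _ hlen' hsB (List.cons_ne_nil _ _) rfl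
    exact ⟨A ++ P, e, Q ++ s :: C, by rw [hPQ]; simp⟩
  · obtain rfl : t = s.rev := Prod.ext hst.symm (Bool.eq_not.2 (Ne.symm hdir))
    rw [Edge.edgeStart_rev] at ht
    subst ht
    rcases eq_or_ne B [] with rfl | hB'
    · exact ⟨A, s, C, by simp⟩
    obtain ⟨P, e, Q, hPQ⟩ := ih _ (by simp at hlen' ⊢; omega) hB hB' rfl
    exact ⟨A ++ s :: P, e, Q ++ s.rev :: C, by rw [hPQ]; simp⟩

variable (R) in
inductive Derives : ℕ → List X → List X → Prop
  | refl (a : List X) : Derives 0 a a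
  | step {n : ℕ} {c : List X} (e : Edge X) (he : e.1 ∈ R) (p q : List X)
      (h : Derives n (p ++ e.rev.src ++ q) c) : Derives (n + 1) (p ++ e.src ++ q) c

namespace Derives

theorem trans {n m : ℕ} {a b c : List X} (h₁ : Derives R n a b) (h₂ : Derives R m b c) :
    Derives R (n + m) a c := by
  induction h₁ with
  | refl => simpa using h₂
  | step e he p q _ ih => simpa [Nat.add_right_comm] using step e he p q (ih h₂)

theorem single {e : Edge X} (he : e.1 ∈ R) (p q : List X) :
    Derives R 1 (p ++ e.src ++ q) (p ++ e.rev.src ++ q) :=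
  step e he p q (refl _)

theorem symm {n : ℕ} {a b : List X} (h : Derives R n a b) : Derives R n b a := by
  induction h with
  | refl => exact refl _
  | step e he p q _ ih => simpa using ih.trans (single (e := e.rev) he p q)

theorem append_left {n : ℕ} {a b : List X} (c : List X) (h : Derives R n a b) :
    Derives R n (c ++ a) (c ++ b) := by
  induction h with
  | refl => exact refl _
  | step e he p q _ ih => simpa using step e he (c ++ p) q (by simpa using ih)

theorem append_right {n : ℕ} {a b : List X} (c : List X) (h : Derives R n a b) :
    Derives R n (a ++ c) (b ++ c) := by
  induction h with
  | refl => exact refl _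
  | step e he p q _ ih => simpa using step e he p (q ++ c) (by simpa using ih)

theorem eq_nil_of_nil {n : ℕ} {b : List X} (h : Derives R n [] b) : b = [] := by
  generalize hnil : ([] : List X) = a at h
  cases h with
  | refl => rfl
  | step e _ p q _ => simp [e.src_ne_nil] at hnil

end Derives

theorem exists_derives_of_conGen {u v : FreeSemigroup X}
    (h : conGen (fun a b => (a, b) ∈ R) u v) : ∃ n, Derives R n (letters u) (letters v) := by
  induction h with
  | of u v huv =>
    exact ⟨1, by simpa [Edge.src, Edge.rev] using Derives.single (e := ((u, v), true)) huv [] []⟩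
  | refl u => exact ⟨0, .refl _⟩
  | symm _ ih => exact ih.imp fun _ h => h.symm
  | trans _ _ ih₁ ih₂ =>
    obtain ⟨n, h₁⟩ := ih₁
    obtain ⟨m, h₂⟩ := ih₂
    exact ⟨n + m, h₁.trans h₂⟩
  | mul _ _ ih₁ ih₂ =>
    obtain ⟨n, h₁⟩ := ih₁
    obtain ⟨m, h₂⟩ := ih₂
    exact ⟨n + m, (h₁.append_right _).trans (h₂.append_left _)⟩

variable (R) in
/-- A derivation recording, in order, the edges of its steps that rewrite the first letter. -/
inductive DerivesVia : ℕ → List X → List X → List (Edge X) → Prop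
  | refl (a : List X) : DerivesVia 0 a a []
  | inner {n : ℕ} {c : List X} {es : List (Edge X)} (e : Edge X) (he : e.1 ∈ R) (x : X)
      (p q : List X) (h : DerivesVia n (x :: (p ++ e.rev.src ++ q)) c es) :
      DerivesVia (n + 1) (x :: (p ++ e.src ++ q)) c es
  | head {n : ℕ} {c : List X} {es : List (Edge X)} (e : Edge X) (he : e.1 ∈ R) (q : List X)
      (h : DerivesVia n (e.rev.src ++ q) c es) : DerivesVia (n + 1) (e.src ++ q) c (e :: es)

theorem Derives.exists_derivesVia {n : ℕ} {a b : List X} (h : Derives R n a b) :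
    ∃ es, DerivesVia R n a b es := by
  induction h with
  | refl a => exact ⟨[], .refl a⟩
  | step e he p q _ ih =>
    obtain ⟨es, h⟩ := ih
    cases p with
    | nil => exact ⟨e :: es, .head e he q h⟩
    | cons x p => exact ⟨es, .inner e he x p q h⟩

namespace DerivesVia

theorem derives {n : ℕ} {a b : List X} {es : List (Edge X)} (h : DerivesVia R n a b es) :
    Derives R n a b := by
  induction h with
  | refl a => exact .refl a
  | inner e he x p q _ ih => exact .step e he (x :: p) q ih
  | head e he q _ ih => exact .step e he [] q ih

theorem derives_tail {n : ℕ} {a b : List X} (h : DerivesVia R n a b []) :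
    Derives R n a.tail b.tail := by
  generalize hnil : ([] : List (Edge X)) = es at h
  induction h with
  | refl a => exact .refl _
  | inner e he x p q _ ih => exact .step e he p q (ih hnil)
  | head => cases hnil

theorem exists_of_cons {n : ℕ} {a b : List X} {e : Edge X} {es : List (Edge X)}
    (h : DerivesVia R n a b (e :: es)) :
    ∃ n₁ n₂ q, n = n₁ + 1 + n₂ ∧ e.1 ∈ R ∧ Derives R n₁ a (e.src ++ q) ∧
      DerivesVia R n₂ (e.rev.src ++ q) b es := by
  generalize hcons : e :: es = es' at h
  induction h with
  | refl => cases hcons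
  | inner e' he' x p q _ ih =>
    obtain ⟨n₁, n₂, q', rfl, he, h₁, h₂⟩ := ih hcons
    exact ⟨n₁ + 1, n₂, q', by omega, he, .step e' he' (x :: p) q h₁, h₂⟩
  | head e' he' q h =>
    obtain ⟨rfl, rfl⟩ := List.cons.inj hcons
    exact ⟨0, _, q, by omega, he', .refl _, h⟩

theorem isWalk {n : ℕ} {a b : List X} {es : List (Edge X)} (h : DerivesVia R n a b es)
    (ha : a ≠ []) (hb : b ≠ []) : IsWalk R firstLetter (a.head ha) es (b.head hb) := by
  induction h with
  | refl a => rfl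
  | inner e he x p q _ ih => exact ih (List.cons_ne_nil _ _) hb
  | head e he q _ ih =>
    refine ⟨he, by rw [List.head_append_of_ne_nil e.src_ne_nil, e.head_src], ?_⟩
    have := ih (List.append_ne_nil_of_left_ne_nil e.rev.src_ne_nil q) hb
    rwa [List.head_append_of_ne_nil e.rev.src_ne_nil, e.rev.head_src, Edge.edgeStart_rev] at this

end DerivesVia

theorem Derives.cancel_append_of_forall_lt {N : ℕ}
    (hcancel : ∀ m < N, ∀ (x : X) s t, Derives R m (x :: s) (x :: t) →
      ∃ m' ≤ m, Derives R m' s t)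
    (c : List X) {n : ℕ} {s t : List X} (hn : n < N) (h : Derives R n (c ++ s) (c ++ t)) :
    ∃ m ≤ n, Derives R m s t := by
  induction c generalizing n with
  | nil => exact ⟨n, le_rfl, h⟩
  | cons x c ih =>
    obtain ⟨m, hm, h⟩ := hcancel n hn x _ _ h
    obtain ⟨m', hm', h⟩ := ih (hm.trans_lt hn) h
    exact ⟨m', hm'.trans hm, h⟩

theorem DerivesVia.exists_shorter {n : ℕ} {a b : List X} {e : Edge X}
    {es₁ es₂ : List (Edge X)}
    (hcancel : ∀ m < n, ∀ c s t, Derives R m (c ++ s) (c ++ t) → ∃ m' ≤ m, Derives R m' s t)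
    (h : DerivesVia R n a b (es₁ ++ e :: e.rev :: es₂)) : ∃ m, m + 2 ≤ n ∧ Derives R m a b := by
  induction es₁ generalizing n a with
  | nil =>
    obtain ⟨n₁, n₂, q, rfl, -, h₁, h₂⟩ := h.exists_of_cons
    obtain ⟨n₃, n₄, q', rfl, -, h₃, h₄⟩ := h₂.exists_of_cons
    obtain ⟨m, hm, h₃⟩ := hcancel n₃ (by omega) _ q q' h₃
    rw [Edge.rev_rev] at h₄
    exact ⟨n₁ + m + n₄, by omega, (h₁.trans (h₃.append_left _)).trans h₄.derives⟩
  | cons f es₁ ih =>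
    obtain ⟨n₁, n₂, q, rfl, hf, h₁, h₂⟩ := h.exists_of_cons
    obtain ⟨m, hm, h₂⟩ := ih (fun m hm => hcancel m (by omega)) h₂
    exact ⟨n₁ + (1 + m), by omega, h₁.trans ((Derives.single hf [] q).trans h₂)⟩

theorem Derives.cancel_cons (hleft : ¬ HasCycle R firstLetter) {n : ℕ} {x : X} {s t : List X}
    (h : Derives R n (x :: s) (x :: t)) : ∃ m ≤ n, Derives R m s t := by
  induction n using Nat.strong_induction_on generalizing x s t with
  | _ n ih =>
  obtain ⟨es, hes⟩ := h.exists_derivesVia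
  rcases eq_or_ne es [] with rfl | hne
  · exact ⟨n, le_rfl, hes.derives_tail⟩
  have hwalk : IsWalk R firstLetter x es x :=
    hes.isWalk (List.cons_ne_nil _ _) (List.cons_ne_nil _ _)
  obtain ⟨es₁, e, es₂, rfl⟩ := hwalk.exists_backtrack hleft hne
  obtain ⟨m, hm, h⟩ := hes.exists_shorter fun m hm c s t =>
    cancel_append_of_forall_lt (fun k hk x s t => ih k (by omega)) c hm
  obtain ⟨m', hm', h⟩ := ih m (by omega) h
  exact ⟨m', by omega, h⟩

theorem Derives.cancel_append (hleft : ¬ HasCycle R firstLetter) {n : ℕ} {c s t : List X}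
    (h : Derives R n (c ++ s) (c ++ t)) : ∃ m ≤ n, Derives R m s t :=
  cancel_append_of_forall_lt (fun _ _ _ _ _ h => h.cancel_cons hleft) c n.lt_succ_self h

end Adian

theorem adian_semigroup_no_idempotent_general {X : Type*}
    (R : Set (FreeSemigroup X × FreeSemigroup X))
    (hleft : ¬ HasCycle R firstLetter) :
    ∀ w : FreeSemigroup X, ¬ (conGen fun a b => (a, b) ∈ R) w (w * w) := by
  intro w hw
  obtain ⟨n, h⟩ := Adian.exists_derives_of_conGen hw
  obtain ⟨m, -, h⟩ := Adian.Derives.cancel_append hleft (c := Adian.letters w) (s := [])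
    (t := Adian.letters w) (by simpa [Adian.letters_mul] using h)
  exact Adian.letters_ne_nil w h.eq_nil_of_nil

/-- If `⟨X|R⟩` is an Adian presentation (its left graph and right graph are
both cycle-free), then the semigroup `Sg⟨X|R⟩` (the quotient of the free semigroup `X⁺`
by the congruence generated by `R`) has no idempotent: no `w ∈ X⁺` satisfies `w = w²`. -/
theorem adian_semigroup_no_idempotent {X : Type*}
    (R : Set (FreeSemigroup X × FreeSemigroup X))
    (hleft : ¬ HasCycle R firstLetter) (hright : ¬ HasCycle R lastLetter) :
    ∀ w : FreeSemigroup X, ¬ (conGen fun a b => (a, b) ∈ R) w (w * w) :=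
  adian_semigroup_no_idempotent_general R hleft
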